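/- Let G be the graph product of a finite simple graph Γ = (V,E) with finite vertex groups (G_v)_{v∈V}, and let A, B ⊆ V each span a complete subgraph of Γ. Then [G(A ∩ B)] is the greatest lower bound of [G(A)] and [G(B)] in the partial order ⪯ on conjugacy classes of finite subgroups of G: [G(A∩B)] ⪯ [G(A)], [G(A∩B)] ⪯ [G(B)], and every conjugacy class [F] of a finite subgroup with [F] ⪯ [G(A)] and [F] ⪯ [G(B)] satisfies [F] ⪯ [G(A∩B)]. -/

import Mathlib

open Monoid

/-- The set of commutator relators defining a graph product. -/
def graphProdRels {V : Type*} (Γ : SimpleGraph V) (G : V → Type*) [∀ v, Group (G v)] :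
    Set (CoprodI G) :=
  {x | ∃ (u v : V) (_ : Γ.Adj u v) (g : G u) (h : G v),
    x = (CoprodI.of g)⁻¹ * (CoprodI.of h)⁻¹ * CoprodI.of g * CoprodI.of h}

/-- The graph product of the graph of groups `(Γ, G)`: the quotient of the free product of the
vertex groups by the normal closure of the commutators of elements of pairs of adjacent vertex
groups. -/
def GraphProduct {V : Type*} (Γ : SimpleGraph V) (G : V → Type*) [∀ v, Group (G v)] : Type _ :=
  CoprodI G ⧸ Subgroup.normalClosure (graphProdRels Γ G)

instance {V : Type*} (Γ : SimpleGraph V) (G : V → Type*) [∀ v, Group (G v)] :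
    Group (GraphProduct Γ G) :=
  QuotientGroup.Quotient.group _

/-- The canonical map from a vertex group into the graph product. -/
def GraphProduct.of {V : Type*} (Γ : SimpleGraph V) (G : V → Type*) [∀ v, Group (G v)] (v : V) :
    G v →* GraphProduct Γ G :=
  (QuotientGroup.mk' _).comp CoprodI.of

/-- `G(A)`: the subgroup of the graph product generated by the images of the vertex groups
`G_a`, `a ∈ A`. -/
def GraphProduct.vsub {V : Type*} (Γ : SimpleGraph V) (G : V → Type*) [∀ v, Group (G v)]
    (A : Set V) : Subgroup (GraphProduct Γ G) :=
  ⨆ a ∈ A, (GraphProduct.of Γ G a).range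

/-- `[A] ⪯ [B]`: there is `g` with `A ⊆ g B g⁻¹`.  This relation on subgroups only depends on
the conjugacy classes of `A` and `B`, so it expresses the relation `⪯` on conjugacy classes of
subgroups via representatives. -/
def ConjClassLE {H : Type*} [Group H] (A B : Subgroup H) : Prop :=
  ∃ g : H, A ≤ B.map (MulAut.conj g).toMonoidHom

/-!
The retraction `π_A : G → G(A)` that kills the vertex groups outside `A` fixes `G(A)` and maps
`G(B)` into `G(A ∩ B)`. If `F ≤ g G(A) g⁻¹` and `F ≤ h G(B) h⁻¹`, then every element of `F` is
`g a g⁻¹ = h b h⁻¹` with `a ∈ G(A)`, `b ∈ G(B)`; applying `π_A` to `a = (g⁻¹h) b (g⁻¹h)⁻¹` gives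
`a = c π_A(b) c⁻¹` with `c = π_A(g⁻¹h)`, so `F ≤ (gc) G(A ∩ B) (gc)⁻¹`.
-/

namespace ConjClassLE

variable {H : Type*} [Group H]

theorem of_le {K L : Subgroup H} (h : K ≤ L) : ConjClassLE K L :=
  ⟨1, fun x hx => ⟨x, h hx, by simp⟩⟩

theorem of_retract (r : H →* H) {F K L M : Subgroup H} (hK : ∀ x ∈ K, r x = x)
    (hL : L.map r ≤ M) (hFK : ConjClassLE F K) (hFL : ConjClassLE F L) : ConjClassLE F M := by
  obtain ⟨g, hg⟩ := hFK
  obtain ⟨h, hh⟩ := hFL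
  refine ⟨g * r (g⁻¹ * h), fun x hx => ?_⟩
  obtain ⟨a, ha, rfl⟩ := hg hx
  obtain ⟨b, hb, hba⟩ := hh hx
  simp only [MulEquiv.coe_toMonoidHom, MulAut.conj_apply] at hba
  have ha_conj : a = (g⁻¹ * h) * b * (g⁻¹ * h)⁻¹ := by
    calc a = g⁻¹ * (g * a * g⁻¹) * g := by group
      _ = (g⁻¹ * h) * b * (g⁻¹ * h)⁻¹ := by rw [← hba]; group
  refine ⟨r b, hL ⟨b, hb, rfl⟩, ?_⟩
  simp only [MulEquiv.coe_toMonoidHom, MulAut.conj_apply]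
  conv_rhs => rw [← hK a ha, ha_conj]
  simp only [map_mul, map_inv]
  group

end ConjClassLE

namespace GraphProduct

variable {V : Type*} {Γ : SimpleGraph V} {G : V → Type*} [∀ v, Group (G v)]

theorem of_commute {u v : V} (huv : Γ.Adj u v) (g : G u) (k : G v) :
    Commute (of Γ G u g) (of Γ G v k) := by
  have hrel : (of Γ G u g)⁻¹ * (of Γ G v k)⁻¹ * (of Γ G u g)⁻¹⁻¹ * (of Γ G v k)⁻¹⁻¹ = 1 := by
    simp only [inv_inv]
    exact (QuotientGroup.eq_one_iff _).2 (Subgroup.subset_normalClosure ⟨u, v, huv, g, k, rfl⟩)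
  exact Commute.inv_inv_iff.1 (commutatorElement_eq_one_iff_commute.1 hrel)

variable (Γ) in
def lift {H : Type*} [Group H] (f : ∀ v, G v →* H)
    (hf : ∀ u v, Γ.Adj u v → ∀ (g : G u) (k : G v), Commute (f u g) (f v k)) :
    GraphProduct Γ G →* H :=
  QuotientGroup.lift _ (CoprodI.lift f) <| Subgroup.normalClosure_le_normal <| by
    rintro _ ⟨u, v, huv, g, k, rfl⟩
    simp only [SetLike.mem_coe, MonoidHom.mem_ker, map_mul, map_inv, CoprodI.lift_of,
      mul_assoc, (hf u v huv g k).eq, inv_mul_cancel_left, inv_mul_cancel]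

@[simp]
theorem lift_of {H : Type*} [Group H] (f : ∀ v, G v →* H) (hf) (v : V) (g : G v) :
    lift Γ f hf (of Γ G v g) = f v g :=
  CoprodI.lift_of f g

variable (Γ G) in
def retract (S : Set V) [DecidablePred (· ∈ S)] : GraphProduct Γ G →* GraphProduct Γ G :=
  lift Γ (fun v => if v ∈ S then of Γ G v else 1) fun u v huv g k => by
    split_ifs
    exacts [of_commute huv g k, Commute.one_right _, Commute.one_left _, Commute.one_left _]

theorem retract_of {S : Set V} [DecidablePred (· ∈ S)] (v : V) (g : G v) :
    retract Γ G S (of Γ G v g) = if v ∈ S then of Γ G v g else 1 := by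
  rw [retract, lift_of]
  split_ifs <;> rfl

theorem of_mem_vsub {A : Set V} {a : V} (ha : a ∈ A) (g : G a) : of Γ G a g ∈ vsub Γ G A :=
  le_iSup₂ (f := fun a (_ : a ∈ A) => (of Γ G a).range) a ha ⟨g, rfl⟩

theorem vsub_le {A : Set V} {K : Subgroup (GraphProduct Γ G)}
    (h : ∀ a ∈ A, ∀ g : G a, of Γ G a g ∈ K) : vsub Γ G A ≤ K :=
  iSup₂_le fun a ha => by
    rintro _ ⟨g, rfl⟩
    exact h a ha g

theorem vsub_mono {A B : Set V} (hAB : A ⊆ B) : vsub Γ G A ≤ vsub Γ G B :=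
  vsub_le fun _ ha g => of_mem_vsub (hAB ha) g

theorem retract_apply_of_mem_vsub {S : Set V} [DecidablePred (· ∈ S)] {x : GraphProduct Γ G}
    (hx : x ∈ vsub Γ G S) : retract Γ G S x = x := by
  have : vsub Γ G S ≤ (retract Γ G S).eqLocus (MonoidHom.id _) :=
    vsub_le fun a ha g => by
      show retract Γ G S (of Γ G a g) = of Γ G a g
      rw [retract_of, if_pos ha]
  exact this hx

theorem map_retract_vsub_le (A B : Set V) [DecidablePred (· ∈ A)] :
    (vsub Γ G B).map (retract Γ G A) ≤ vsub Γ G (A ∩ B) :=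
  Subgroup.map_le_iff_le_comap.2 <| vsub_le fun b hb g => by
    rw [Subgroup.mem_comap, retract_of]
    split_ifs with hbA
    exacts [of_mem_vsub (Set.mem_inter hbA hb) g, one_mem _]

end GraphProduct

theorem graphProduct_conjClass_glb_general {V : Type*} (Γ : SimpleGraph V)
    (G : V → Type*) [∀ v, Group (G v)] (A B : Set V) :
    ConjClassLE (GraphProduct.vsub Γ G (A ∩ B)) (GraphProduct.vsub Γ G A) ∧
    ConjClassLE (GraphProduct.vsub Γ G (A ∩ B)) (GraphProduct.vsub Γ G B) ∧
    ∀ F : Subgroup (GraphProduct Γ G), Finite F →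
      ConjClassLE F (GraphProduct.vsub Γ G A) → ConjClassLE F (GraphProduct.vsub Γ G B) →
      ConjClassLE F (GraphProduct.vsub Γ G (A ∩ B)) := by
  classical
  refine ⟨.of_le (GraphProduct.vsub_mono Set.inter_subset_left),
    .of_le (GraphProduct.vsub_mono Set.inter_subset_right), fun F _ hFA hFB => ?_⟩
  exact hFA.of_retract (GraphProduct.retract Γ G A)
    (fun _ => GraphProduct.retract_apply_of_mem_vsub) (GraphProduct.map_retract_vsub_le A B) hFB

/-- For complete `A, B ⊆ V`, the conjugacy class of `G(A ∩ B)` is the greatest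
lower bound of those of `G(A)` and `G(B)` in the order `⪯` on conjugacy classes of finite
subgroups of `G`. -/
theorem graphProduct_conjClass_glb {V : Type*} [Fintype V] (Γ : SimpleGraph V)
    (G : V → Type*) [∀ v, Group (G v)] [∀ v, Finite (G v)] (A B : Set V)
    (hA : A.Pairwise Γ.Adj) (hB : B.Pairwise Γ.Adj) :
    ConjClassLE (GraphProduct.vsub Γ G (A ∩ B)) (GraphProduct.vsub Γ G A) ∧
    ConjClassLE (GraphProduct.vsub Γ G (A ∩ B)) (GraphProduct.vsub Γ G B) ∧
    ∀ F : Subgroup (GraphProduct Γ G), Finite F →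
      ConjClassLE F (GraphProduct.vsub Γ G A) → ConjClassLE F (GraphProduct.vsub Γ G B) →
      ConjClassLE F (GraphProduct.vsub Γ G (A ∩ B)) :=
  graphProduct_conjClass_glb_general Γ G A B
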